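/- Let (A,B) be a consistent basic instance of nonempty sums of cycles such that B(b) = 1 for every b ∈ L(B) (all cycles of B have distinct lengths). Then the instance has at most one solution, and if a solution exists it equals C_1 (so that A = B). -/

import Mathlib

/-- A sum of cycles has all cycle lengths positive. -/
def Pos (A : ℕ →₀ ℕ) : Prop := ∀ a ∈ A.support, 0 < a

/-- The single cycle of length `n`. -/
noncomputable def Cyc (n : ℕ) : ℕ →₀ ℕ := Finsupp.single n 1

/-- Product of sums of cycles: `C_a · C_x = gcd(a,x) C_{lcm(a,x)}`, extended by distributivity. -/
noncomputable def cmul (A X : ℕ →₀ ℕ) : ℕ →₀ ℕ :=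
  A.sum fun a m => X.sum fun x n => (m * n * Nat.gcd a x) • Finsupp.single (Nat.lcm a x) 1

/-- Number of vertices of a sum of cycles. -/
def size (A : ℕ →₀ ℕ) : ℕ := A.sum fun ℓ m => ℓ * m

/-- The support `L(A,B)` of an instance. -/
def instSupp (A B : ℕ →₀ ℕ) : Set ℕ :=
  {x | 0 < x ∧ x ≤ size B / size A ∧ ∀ a ∈ A.support, Nat.lcm a x ∈ B.support}

/-- Consistency: `L(A) ∨ L(A,B) = L(B)`. -/
def Consistent (A B : ℕ →₀ ℕ) : Prop :=
  {ℓ | ∃ a ∈ A.support, ∃ x ∈ instSupp A B, Nat.lcm a x = ℓ} = ↑B.support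

/-- Cycle length multiplication `A ⊗ p`. -/
noncomputable def otimes (A : ℕ →₀ ℕ) (p : ℕ) : ℕ →₀ ℕ :=
  A.mapDomain (fun a => p * a)

/-- Cycle length division `A ⊘ p`: `(A ⊘ p)(a) = A (p*a)`. -/
noncomputable def oslash (A : ℕ →₀ ℕ) (p : ℕ) : ℕ →₀ ℕ :=
  if hp : p = 0 then 0 else
    Finsupp.comapDomain (fun a => p * a) A ((mul_right_injective₀ hp).injOn)

/-- Contraction `A ⊟ p`: each cycle of length `p*a` becomes `p` cycles of length `a`. -/
noncomputable def contract (A : ℕ →₀ ℕ) (p : ℕ) : ℕ →₀ ℕ :=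
  A.filter (fun a => ¬ p ∣ a) + p • oslash A p

/-!
If `AX = B`, each pair of cycles `C_a` of `A` and `C_x` of `X` contributes
`A(a) X(x) gcd(a,x)` cycles of length `lcm(a,x)` to `B`. When every length of `B` occurs once,
all these contributions are `1`, so every `x` is coprime to every `a`, hence to `lcm L(A)`.
Since `x ∣ lcm(a,x) ∈ L(B)` divides `lcm L(A)` as the instance is basic, `x = 1`;
and `X(1) = 1`, so `X = C_1` and `A = A C_1 = B`.
-/

theorem Nat.eq_one_of_dvd_finset_lcm_of_coprime {s : Finset ℕ} {x : ℕ}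
    (hdvd : x ∣ s.lcm id) (hcop : ∀ a ∈ s, Nat.Coprime x a) : x = 1 :=
  Nat.Coprime.eq_one_of_dvd (Nat.Coprime.prod_right hcop) (hdvd.trans (s.lcm_dvd_prod id))

theorem cmul_apply (A X : ℕ →₀ ℕ) (b : ℕ) :
    cmul A X b = ∑ a ∈ A.support, ∑ x ∈ X.support,
      if Nat.lcm a x = b then A a * X x * Nat.gcd a x else 0 := by
  unfold cmul
  simp only [Finsupp.sum, Finset.sum_apply', Finsupp.smul_apply,
    Finsupp.single_apply, smul_eq_mul, mul_ite, mul_one, mul_zero]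

@[simp]
theorem zero_cmul (X : ℕ →₀ ℕ) : cmul 0 X = 0 := by
  simp [cmul]

@[simp]
theorem cmul_zero (A : ℕ →₀ ℕ) : cmul A 0 = 0 := by
  simp [cmul]

@[simp]
theorem cmul_cyc_one (A : ℕ →₀ ℕ) : cmul A (Cyc 1) = A := by
  conv_rhs => rw [← Finsupp.sum_single A]
  refine Finsupp.sum_congr fun a _ => ?_
  rw [Cyc, Finsupp.sum_single_index (by simp)]
  simp [Finsupp.smul_single]

theorem mul_gcd_le_cmul_apply_lcm {A X : ℕ →₀ ℕ} {a x : ℕ} (ha : a ∈ A.support)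
    (hx : x ∈ X.support) : A a * X x * Nat.gcd a x ≤ cmul A X (Nat.lcm a x) := by
  rw [cmul_apply]
  refine le_trans ?_ (Finset.single_le_sum (fun _ _ => Nat.zero_le _) ha)
  refine le_trans ?_ (Finset.single_le_sum (fun _ _ => Nat.zero_le _) hx)
  simp

theorem mul_gcd_pos {A X : ℕ →₀ ℕ} {a x : ℕ} (ha : a ∈ A.support) (hx : x ∈ X.support)
    (hxpos : 0 < x) : 0 < A a * X x * Nat.gcd a x :=
  Nat.mul_pos (Nat.mul_pos (Nat.pos_of_ne_zero (Finsupp.mem_support_iff.mp ha))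
    (Nat.pos_of_ne_zero (Finsupp.mem_support_iff.mp hx))) (Nat.gcd_pos_of_pos_right a hxpos)

theorem lcm_mem_support_cmul {A X : ℕ →₀ ℕ} {a x : ℕ} (ha : a ∈ A.support)
    (hx : x ∈ X.support) (hxpos : 0 < x) : Nat.lcm a x ∈ (cmul A X).support :=
  Finsupp.mem_support_iff.mpr
    (Nat.pos_iff_ne_zero.mp ((mul_gcd_pos ha hx hxpos).trans_le (mul_gcd_le_cmul_apply_lcm ha hx)))

theorem mul_gcd_eq_one_of_forall_cmul_apply_eq_one {A X : ℕ →₀ ℕ} {a x : ℕ}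
    (ha : a ∈ A.support) (hx : x ∈ X.support) (hxpos : 0 < x)
    (hmult : ∀ b ∈ (cmul A X).support, cmul A X b = 1) :
    A a * X x * Nat.gcd a x = 1 :=
  le_antisymm (hmult _ (lcm_mem_support_cmul ha hx hxpos) ▸ mul_gcd_le_cmul_apply_lcm ha hx)
    (mul_gcd_pos ha hx hxpos)

theorem distinct_lengths_unique_solution_general (A B : ℕ →₀ ℕ) (hBne : B ≠ 0)
    (hbasic : ∀ b ∈ B.support, b ∣ A.support.lcm id)
    (hmult : ∀ b ∈ B.support, B b = 1) :
    ∀ X : ℕ →₀ ℕ, Pos X → cmul A X = B → X = Cyc 1 ∧ A = B := by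
  rintro X hX rfl
  obtain ⟨a, ha⟩ : A.support.Nonempty :=
    Finsupp.support_nonempty_iff.mpr (by rintro rfl; exact hBne (zero_cmul X))
  obtain ⟨x₀, hx₀⟩ : X.support.Nonempty :=
    Finsupp.support_nonempty_iff.mpr (by rintro rfl; exact hBne (cmul_zero A))
  have hunit : ∀ a' ∈ A.support, ∀ x ∈ X.support, A a' * X x * Nat.gcd a' x = 1 :=
    fun a' ha' x hx => mul_gcd_eq_one_of_forall_cmul_apply_eq_one ha' hx (hX x hx) hmult
  have hsupp : ∀ x ∈ X.support, x = 1 := fun x hx =>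
    Nat.eq_one_of_dvd_finset_lcm_of_coprime
      ((Nat.dvd_lcm_right a x).trans (hbasic _ (lcm_mem_support_cmul ha hx (hX x hx))))
      fun a' ha' => Nat.Coprime.symm (Nat.eq_one_of_mul_eq_one_left (hunit a' ha' x hx))
  have hone : 1 ∈ X.support := hsupp x₀ hx₀ ▸ hx₀
  have hX1 : X 1 = 1 :=
    Nat.eq_one_of_mul_eq_one_left (Nat.eq_one_of_mul_eq_one_right (hunit a ha 1 hone))
  have hXeq : X = Cyc 1 := by
    have h := Finsupp.support_subset_singleton.mp fun x hx => Finset.mem_singleton.mpr (hsupp x hx)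
    rwa [hX1] at h
  exact ⟨hXeq, by rw [hXeq, cmul_cyc_one]⟩

theorem distinct_lengths_unique_solution (A B : ℕ →₀ ℕ) (hA : Pos A) (hB : Pos B)
    (hAne : A ≠ 0) (hBne : B ≠ 0) (hcons : Consistent A B)
    (hbasic : ∀ b ∈ B.support, b ∣ A.support.lcm id)
    (hmult : ∀ b ∈ B.support, B b = 1) :
    ∀ X : ℕ →₀ ℕ, Pos X → cmul A X = B → X = Cyc 1 ∧ A = B :=
  distinct_lengths_unique_solution_general A B hBne hbasic hmult
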